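/- (Theorem 1, tracking form.) Assume A_q = exp(hH) and that Q − P + A_qᵀ P A_q is negative definite. Then along every quantized MPC closed-loop trajectory (x_q(k), r(k), U*(k)) the tracking error converges to zero: ‖x_q(k) − r(k)‖ → 0 as k → ∞, and moreover the applied inputs converge to zero: u*_0(k) → 0. -/

import Mathlib

/-!
In the error coordinates `e = x_q - r`, which follow the prediction model because
`A_q = exp (h H)` propagates the reference, the optimal cost `V k` is a Lyapunov function.
The shifted input sequence `(u₁, …, u_{N-1}, 0)` is admissible at time `k + 1`, and its cost is
`V k` minus the stage cost `e_kᵀ Q e_k + u_kᵀ R u_k` plus the term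
`p_Nᵀ (Q - P + A_qᵀ P A_q) p_N ≤ 0` at the predicted terminal state `p_N`.
Hence the stage costs are summable, so they tend to `0`, and positive definiteness of `Q` and `R` turns this into `e_k → 0` and `u_k → 0`.
-/

open Matrix Filter Topology

/-- Predicted states of the quantized system: `x₀ = x`, `x_{i+1} = A_q x_i + h B_q u_i`
(inputs beyond the horizon are taken to be `0`, but they are never used below). -/
noncomputable def predState {n m N : ℕ} (Aq : Matrix (Fin n) (Fin n) ℝ)
    (Bq : Matrix (Fin n) (Fin m) ℝ) (h : ℝ) (x : Fin n → ℝ)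
    (U : Fin N → Fin m → ℝ) : ℕ → (Fin n → ℝ)
  | 0 => x
  | i + 1 => Aq *ᵥ (predState Aq Bq h x U i) +
      h • (Bq *ᵥ (if hi : i < N then U ⟨i, hi⟩ else 0))

/-- Reference states: `r_i = (exp (h H))^i r`. -/
noncomputable def refState {n : ℕ} (H : Matrix (Fin n) (Fin n) ℝ) (h : ℝ)
    (r : Fin n → ℝ) (i : ℕ) : Fin n → ℝ :=
  ((NormedSpace.exp (h • H)) ^ i) *ᵥ r

/-- The MPC cost
`J(x, r, U) = (x_N - r_N)ᵀ P (x_N - r_N) + Σ_{i<N} [(x_i - r_i)ᵀ Q (x_i - r_i) + u_iᵀ R u_i]`. -/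
noncomputable def mpcCost {n m N : ℕ} (Aq : Matrix (Fin n) (Fin n) ℝ)
    (Bq : Matrix (Fin n) (Fin m) ℝ) (H : Matrix (Fin n) (Fin n) ℝ) (h : ℝ)
    (P Q : Matrix (Fin n) (Fin n) ℝ) (R : Matrix (Fin m) (Fin m) ℝ)
    (x r : Fin n → ℝ) (U : Fin N → Fin m → ℝ) : ℝ :=
  (predState Aq Bq h x U N - refState H h r N) ⬝ᵥ
      (P *ᵥ (predState Aq Bq h x U N - refState H h r N)) +
    ∑ i : Fin N,
      ((predState Aq Bq h x U i - refState H h r i) ⬝ᵥ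
          (Q *ᵥ (predState Aq Bq h x U i - refState H h r i)) +
        (U i) ⬝ᵥ (R *ᵥ (U i)))

/-- The quantized input set `𝒰^N` with `𝒰 = {-1,0,1}^m`. -/
def quantSet (m N : ℕ) : Set (Fin N → Fin m → ℝ) :=
  {U | ∀ i j, U i j = -1 ∨ U i j = 0 ∨ U i j = 1}

/-- The value function `V(x,r) = min_{U ∈ 𝒰^N} J(x,r,U)`. -/
noncomputable def valueFn {n m N : ℕ} (Aq : Matrix (Fin n) (Fin n) ℝ)
    (Bq : Matrix (Fin n) (Fin m) ℝ) (H : Matrix (Fin n) (Fin n) ℝ) (h : ℝ)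
    (P Q : Matrix (Fin n) (Fin n) ℝ) (R : Matrix (Fin m) (Fin m) ℝ)
    (x r : Fin n → ℝ) : ℝ :=
  sInf ((fun U => mpcCost Aq Bq H h P Q R x r U) '' quantSet m N)

/-- The shifted input sequence: drop `u₀` and append `0`. -/
def shiftSeq {m N : ℕ} (U : Fin N → Fin m → ℝ) : Fin N → Fin m → ℝ :=
  fun i => if hi : (i : ℕ) + 1 < N then U ⟨(i : ℕ) + 1, hi⟩ else 0

section QuadraticForm

variable {ι : Type*} [Fintype ι] {M : Matrix ι ι ℝ}

theorem Matrix.PosDef.exists_pos_mul_norm_sq_le (hM : M.PosDef) :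
    ∃ c > 0, ∀ x : ι → ℝ, c * ‖x‖ ^ 2 ≤ x ⬝ᵥ M *ᵥ x := by
  cases isEmpty_or_nonempty ι
  · exact ⟨1, one_pos, fun x => by simp [Subsingleton.elim x 0]⟩
  have hcont : Continuous fun x : ι → ℝ => x ⬝ᵥ M *ᵥ x := by fun_prop
  obtain ⟨x₀, hx₀, hmin⟩ := (isCompact_sphere (0 : ι → ℝ) 1).exists_isMinOn
    (NormedSpace.sphere_nonempty.mpr zero_le_one) hcont.continuousOn
  have hx₀ : x₀ ≠ 0 := ne_zero_of_mem_unit_sphere ⟨x₀, hx₀⟩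
  refine ⟨x₀ ⬝ᵥ M *ᵥ x₀, hM.dotProduct_mulVec_pos hx₀, fun x => ?_⟩
  rcases eq_or_ne x 0 with rfl | hx
  · simp
  have hnx : ‖x‖ ≠ 0 := norm_ne_zero_iff.mpr hx
  have hunit : ‖x‖⁻¹ • x ∈ Metric.sphere (0 : ι → ℝ) 1 := by
    simp [norm_smul, hnx]
  calc (x₀ ⬝ᵥ M *ᵥ x₀) * ‖x‖ ^ 2
      ≤ ((‖x‖⁻¹ • x) ⬝ᵥ M *ᵥ (‖x‖⁻¹ • x)) * ‖x‖ ^ 2 := by gcongr; exact hmin hunit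
    _ = x ⬝ᵥ M *ᵥ x := by
      simp only [mulVec_smul, dotProduct_smul, smul_dotProduct, smul_eq_mul]
      field_simp

theorem Matrix.PosDef.tendsto_zero_of_tendsto_dotProduct_mulVec {α : Type*} {l : Filter α}
    {f : α → ι → ℝ} (hM : M.PosDef) (hf : Tendsto (fun a => f a ⬝ᵥ M *ᵥ f a) l (𝓝 0)) :
    Tendsto f l (𝓝 0) := by
  obtain ⟨c, hc, hle⟩ := hM.exists_pos_mul_norm_sq_le
  have hsq : Tendsto (fun a => ‖f a‖ ^ 2) l (𝓝 0) := by
    refine squeeze_zero (fun a => by positivity) (fun a => ?_) (by simpa using hf.const_mul c⁻¹)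
    rw [le_inv_mul_iff₀ hc]
    exact hle (f a)
  rw [tendsto_zero_iff_norm_tendsto_zero]
  simpa using hsq.sqrt

end QuadraticForm

theorem tendsto_zero_of_add_le_of_nonneg {V D : ℕ → ℝ} (hV : ∀ k, 0 ≤ V k) (hD : ∀ k, 0 ≤ D k)
    (hdesc : ∀ k, V (k + 1) + D k ≤ V k) : Tendsto D atTop (𝓝 0) := by
  have hsum : ∀ n, ∑ k ∈ Finset.range n, D k ≤ V 0 := fun n => by
    have : ∀ n, V n + ∑ k ∈ Finset.range n, D k ≤ V 0 := fun n => by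
      induction n with
      | zero => simp
      | succ n ih => rw [Finset.sum_range_succ]; linarith [hdesc n]
    linarith [this n, hV n]
  exact (summable_of_sum_range_le hD hsum).tendsto_atTop_zero

section Prediction

variable {n m N : ℕ} (Aq : Matrix (Fin n) (Fin n) ℝ) (Bq : Matrix (Fin n) (Fin m) ℝ) (h : ℝ)

def padInput (U : Fin N → Fin m → ℝ) (i : ℕ) : Fin m → ℝ :=
  if hi : i < N then U ⟨i, hi⟩ else 0

theorem padInput_coe (U : Fin N → Fin m → ℝ) (i : Fin N) : padInput U i = U i := by
  simp [padInput]

theorem padInput_of_le (U : Fin N → Fin m → ℝ) {i : ℕ} (hi : N ≤ i) : padInput U i = 0 :=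
  dif_neg (by omega)

theorem padInput_shiftSeq (U : Fin N → Fin m → ℝ) (i : ℕ) :
    padInput (shiftSeq U) i = padInput U (i + 1) := by
  by_cases hi : i + 1 < N
  · simp [padInput, shiftSeq, hi, Nat.lt_of_succ_lt hi]
  · rw [padInput_of_le U (by omega)]
    by_cases hi' : i < N
    · simp [padInput, shiftSeq, hi, hi']
    · exact padInput_of_le _ (by omega)

theorem shiftSeq_mem_quantSet {U : Fin N → Fin m → ℝ} (hU : U ∈ quantSet m N) :
    shiftSeq U ∈ quantSet m N := by
  intro i j
  unfold shiftSeq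
  split_ifs
  · exact hU _ j
  · exact Or.inr (Or.inl rfl)

theorem predState_zero (x : Fin n → ℝ) (U : Fin N → Fin m → ℝ) : predState Aq Bq h x U 0 = x :=
  rfl

theorem predState_succ (x : Fin n → ℝ) (U : Fin N → Fin m → ℝ) (i : ℕ) :
    predState Aq Bq h x U (i + 1) = Aq *ᵥ predState Aq Bq h x U i + h • (Bq *ᵥ padInput U i) :=
  rfl

theorem predState_shiftSeq (x : Fin n → ℝ) (U : Fin N → Fin m → ℝ) (i : ℕ) :
    predState Aq Bq h (predState Aq Bq h x U 1) (shiftSeq U) i = predState Aq Bq h x U (i + 1) := by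
  induction i with
  | zero => rfl
  | succ i ih => rw [predState_succ, ih, padInput_shiftSeq, ← predState_succ]

theorem mpcCost_zero_eq (H : Matrix (Fin n) (Fin n) ℝ) (P Q : Matrix (Fin n) (Fin n) ℝ)
    (R : Matrix (Fin m) (Fin m) ℝ) (x : Fin n → ℝ) (U : Fin N → Fin m → ℝ) :
    mpcCost Aq Bq H h P Q R x 0 U =
      predState Aq Bq h x U N ⬝ᵥ P *ᵥ predState Aq Bq h x U N +
        ∑ i ∈ Finset.range N, (predState Aq Bq h x U i ⬝ᵥ Q *ᵥ predState Aq Bq h x U i +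
          padInput U i ⬝ᵥ R *ᵥ padInput U i) := by
  rw [Finset.sum_range]
  simp only [mpcCost, refState, mulVec_zero, sub_zero, padInput_coe]

theorem mpcCost_shiftSeq_add (H : Matrix (Fin n) (Fin n) ℝ) (P Q : Matrix (Fin n) (Fin n) ℝ)
    (R : Matrix (Fin m) (Fin m) ℝ) (x : Fin n → ℝ) (U : Fin N → Fin m → ℝ) :
    mpcCost Aq Bq H h P Q R (predState Aq Bq h x U 1) 0 (shiftSeq U) +
        (x ⬝ᵥ Q *ᵥ x + padInput U 0 ⬝ᵥ R *ᵥ padInput U 0) =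
      mpcCost Aq Bq H h P Q R x 0 U +
        predState Aq Bq h x U N ⬝ᵥ (Q - P + Aqᵀ * P * Aq) *ᵥ predState Aq Bq h x U N := by
  have hterminal : predState Aq Bq h x U (N + 1) = Aq *ᵥ predState Aq Bq h x U N := by
    rw [predState_succ, padInput_of_le U le_rfl, mulVec_zero, smul_zero, add_zero]
  have htransfer (v : Fin n → ℝ) : (Aq *ᵥ v) ⬝ᵥ P *ᵥ (Aq *ᵥ v) = v ⬝ᵥ (Aqᵀ * P * Aq) *ᵥ v := by
    rw [← mulVec_mulVec, ← mulVec_mulVec, dotProduct_mulVec v Aqᵀ, vecMul_transpose]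
  simp only [mpcCost_zero_eq, predState_shiftSeq, padInput_shiftSeq]
  rw [hterminal, htransfer]
  set f : ℕ → ℝ := fun i => predState Aq Bq h x U i ⬝ᵥ Q *ᵥ predState Aq Bq h x U i +
    padInput U i ⬝ᵥ R *ᵥ padInput U i
  have htelescope := (Finset.sum_range_succ' f N).symm.trans (Finset.sum_range_succ f N)
  simp only [f, predState_zero, padInput_of_le U le_rfl, mulVec_zero, dotProduct_zero,
    add_zero] at htelescope ⊢
  rw [add_mulVec, sub_mulVec, dotProduct_add, dotProduct_sub]
  linarith

theorem mpcCost_add_stageCost_le_of_le_shiftSeq (H : Matrix (Fin n) (Fin n) ℝ)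
    {P Q : Matrix (Fin n) (Fin n) ℝ} {R : Matrix (Fin m) (Fin m) ℝ}
    (hterminal : (-(Q - P + Aqᵀ * P * Aq)).PosSemidef) {x : Fin n → ℝ}
    {U U' : Fin N → Fin m → ℝ}
    (hU' : mpcCost Aq Bq H h P Q R (predState Aq Bq h x U 1) 0 U' ≤
      mpcCost Aq Bq H h P Q R (predState Aq Bq h x U 1) 0 (shiftSeq U)) :
    mpcCost Aq Bq H h P Q R (predState Aq Bq h x U 1) 0 U' +
        (x ⬝ᵥ Q *ᵥ x + padInput U 0 ⬝ᵥ R *ᵥ padInput U 0) ≤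
      mpcCost Aq Bq H h P Q R x 0 U := by
  have hneg := hterminal.dotProduct_mulVec_nonneg (predState Aq Bq h x U N)
  rw [star_trivial, neg_mulVec, dotProduct_neg] at hneg
  linarith [mpcCost_shiftSeq_add Aq Bq h H P Q R x U]

end Prediction

theorem refState_succ {n : ℕ} (H : Matrix (Fin n) (Fin n) ℝ) (h : ℝ) (r : Fin n → ℝ) (i : ℕ) :
    refState H h r (i + 1) = NormedSpace.exp (h • H) *ᵥ refState H h r i := by
  rw [refState, refState, pow_succ', ← mulVec_mulVec]

theorem predState_exp_sub_refState {n m N : ℕ} (H : Matrix (Fin n) (Fin n) ℝ)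
    (Bq : Matrix (Fin n) (Fin m) ℝ) (h : ℝ) (x r : Fin n → ℝ) (U : Fin N → Fin m → ℝ) (i : ℕ) :
    predState (NormedSpace.exp (h • H)) Bq h x U i - refState H h r i =
      predState (NormedSpace.exp (h • H)) Bq h (x - r) U i := by
  induction i with
  | zero => simp [predState, refState]
  | succ i ih =>
    rw [predState_succ, predState_succ, refState_succ, ← ih, mulVec_sub]
    abel

theorem mpcCost_exp_eq_mpcCost_sub {n m N : ℕ} (H : Matrix (Fin n) (Fin n) ℝ)
    (Bq : Matrix (Fin n) (Fin m) ℝ) (h : ℝ) (P Q : Matrix (Fin n) (Fin n) ℝ)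
    (R : Matrix (Fin m) (Fin m) ℝ) (x r : Fin n → ℝ) (U : Fin N → Fin m → ℝ) :
    mpcCost (NormedSpace.exp (h • H)) Bq H h P Q R x r U =
      mpcCost (NormedSpace.exp (h • H)) Bq H h P Q R (x - r) 0 U := by
  simp only [mpcCost, predState_exp_sub_refState, sub_zero]

theorem mpcCost_nonneg {n m N : ℕ} (Aq H : Matrix (Fin n) (Fin n) ℝ)
    (Bq : Matrix (Fin n) (Fin m) ℝ) (h : ℝ) {P Q : Matrix (Fin n) (Fin n) ℝ}
    {R : Matrix (Fin m) (Fin m) ℝ} (hP : P.PosSemidef) (hQ : Q.PosSemidef) (hR : R.PosSemidef)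
    (x r : Fin n → ℝ) (U : Fin N → Fin m → ℝ) : 0 ≤ mpcCost Aq Bq H h P Q R x r U :=
  add_nonneg (hP.dotProduct_mulVec_nonneg _) <| Finset.sum_nonneg fun _ _ =>
    add_nonneg (hQ.dotProduct_mulVec_nonneg _) (hR.dotProduct_mulVec_nonneg _)

theorem stmt4_general {n m N : ℕ} (hN : 0 < N) (h : ℝ)
    (Aq H : Matrix (Fin n) (Fin n) ℝ) (Bq : Matrix (Fin n) (Fin m) ℝ)
    (P Q : Matrix (Fin n) (Fin n) ℝ) (R : Matrix (Fin m) (Fin m) ℝ)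
    (hP : P.PosDef) (hQ : Q.PosDef) (hR : R.PosDef)
    (hA : Aq = NormedSpace.exp (h • H))
    (hneg : (-(Q - P + Aqᵀ * P * Aq)).PosDef)
    (xq r : ℕ → (Fin n → ℝ)) (Ustar : ℕ → (Fin N → Fin m → ℝ))
    (hmem : ∀ k, Ustar k ∈ quantSet m N)
    (hmin : ∀ k, ∀ U ∈ quantSet m N,
      mpcCost Aq Bq H h P Q R (xq k) (r k) (Ustar k) ≤
        mpcCost Aq Bq H h P Q R (xq k) (r k) U)
    (hx : ∀ k, xq (k + 1) = Aq *ᵥ xq k + h • (Bq *ᵥ Ustar k ⟨0, hN⟩))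
    (hr : ∀ k, r (k + 1) = NormedSpace.exp (h • H) *ᵥ r k) :
    Filter.Tendsto (fun k => xq k - r k) Filter.atTop (nhds 0) ∧
      Filter.Tendsto (fun k => Ustar k ⟨0, hN⟩) Filter.atTop (nhds 0) := by
  subst hA
  simp only [fun k => mpcCost_exp_eq_mpcCost_sub (N := N) H Bq h P Q R (xq k) (r k)] at hmin
  set A := NormedSpace.exp (h • H)
  set u : ℕ → Fin m → ℝ := fun k => Ustar k ⟨0, hN⟩
  set V : ℕ → ℝ := fun k => mpcCost A Bq H h P Q R (xq k - r k) 0 (Ustar k)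
  have hu (k : ℕ) : padInput (Ustar k) 0 = u k := padInput_coe _ ⟨0, hN⟩
  have he (k : ℕ) : xq (k + 1) - r (k + 1) = predState A Bq h (xq k - r k) (Ustar k) 1 := by
    rw [predState_succ, predState_zero, hu, hx, hr, mulVec_sub]
    abel
  have hV (k : ℕ) : 0 ≤ V k :=
    mpcCost_nonneg _ _ _ _ hP.posSemidef hQ.posSemidef hR.posSemidef _ _ _
  have hdecrease (k : ℕ) :
      V (k + 1) + ((xq k - r k) ⬝ᵥ Q *ᵥ (xq k - r k) + u k ⬝ᵥ R *ᵥ u k) ≤ V k := by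
    have hopt := hmin (k + 1) _ (shiftSeq_mem_quantSet (hmem k))
    rw [he] at hopt
    simpa only [V, he, hu] using
      mpcCost_add_stageCost_le_of_le_shiftSeq A Bq h H hneg.posSemidef hopt
  have hQe (k : ℕ) : 0 ≤ (xq k - r k) ⬝ᵥ Q *ᵥ (xq k - r k) :=
    hQ.posSemidef.dotProduct_mulVec_nonneg _
  have hRu (k : ℕ) : 0 ≤ u k ⬝ᵥ R *ᵥ u k := hR.posSemidef.dotProduct_mulVec_nonneg _
  exact ⟨hQ.tendsto_zero_of_tendsto_dotProduct_mulVec <|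
      tendsto_zero_of_add_le_of_nonneg hV hQe fun k => by linarith [hdecrease k, hRu k],
    hR.tendsto_zero_of_tendsto_dotProduct_mulVec <|
      tendsto_zero_of_add_le_of_nonneg hV hRu fun k => by linarith [hdecrease k, hQe k]⟩

/-- Theorem 1, tracking form: along any quantized MPC closed-loop trajectory,
the tracking error `x_q(k) - r(k)` tends to `0` and the applied inputs tend to `0`. -/
theorem stmt4 {n m N : ℕ} (hN : 0 < N) (h : ℝ) (hh : 0 < h)
    (Aq H : Matrix (Fin n) (Fin n) ℝ) (Bq : Matrix (Fin n) (Fin m) ℝ)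
    (P Q : Matrix (Fin n) (Fin n) ℝ) (R : Matrix (Fin m) (Fin m) ℝ)
    (hP : P.PosDef) (hQ : Q.PosDef) (hR : R.PosDef)
    (hA : Aq = NormedSpace.exp (h • H))
    (hneg : (-(Q - P + Aqᵀ * P * Aq)).PosDef)
    (xq r : ℕ → (Fin n → ℝ)) (Ustar : ℕ → (Fin N → Fin m → ℝ))
    (hmem : ∀ k, Ustar k ∈ quantSet m N)
    (hmin : ∀ k, ∀ U ∈ quantSet m N,
      mpcCost Aq Bq H h P Q R (xq k) (r k) (Ustar k) ≤
        mpcCost Aq Bq H h P Q R (xq k) (r k) U)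
    (hx : ∀ k, xq (k + 1) = Aq *ᵥ xq k + h • (Bq *ᵥ Ustar k ⟨0, hN⟩))
    (hr : ∀ k, r (k + 1) = NormedSpace.exp (h • H) *ᵥ r k) :
    Filter.Tendsto (fun k => xq k - r k) Filter.atTop (nhds 0) ∧
      Filter.Tendsto (fun k => Ustar k ⟨0, hN⟩) Filter.atTop (nhds 0) :=
  stmt4_general hN h Aq H Bq P Q R hP hQ hR hA hneg xq r Ustar hmem hmin hx hr
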